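/- arXiv:2301.11028 — 3 statements merged into one kernel-verified Lean document; each statement's English description precedes it below -/
import Mathlib

section
/- Let A = U·diag(λ)·Uᴴ be an N×N Hermitian complex matrix with U unitary and λ : Fin N → ℝ, let ω be real, set X₀ = ωA, and define the Hotelling–Bodewig iterates X_t = 2X_{t−1} − X_{t−1}·A·X_{t−1}. Then for every t ≥ 0, the squared Frobenius norm of the residual satisfies ‖I − A·X_t‖_F² = Σ_{n=0}^{N−1} (1 − ωλₙ²)^{2^{t+1}}. -/
open Matrix

attribute [local instance] Matrix.frobeniusNormedAddCommGroup

/-!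
The residual `R_t = 1 - A X_t` squares at every step, so `R_t = (1 - ωA²)^(2^t)`, which is
`U diag((1 - ωλₙ²)^(2^t)) Uᴴ`. The Frobenius norm is invariant under unitary multiplication on
either side, so `‖R_t‖²` is the sum of the squared moduli of those diagonal entries.
-/

namespace Matrix

variable {m n 𝕜 : Type*} [Fintype m] [Fintype n] [RCLike 𝕜]

theorem frobenius_norm_sq_eq_re_trace (M : Matrix m n 𝕜) :
    ‖M‖ ^ 2 = RCLike.re (Mᴴ * M).trace := by
  have h : ‖M‖ ^ 2 = ∑ i, ∑ j, ‖M i j‖ ^ 2 := by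
    rw [frobenius_norm_def, ← Real.rpow_natCast, ← Real.rpow_mul (by positivity)]
    norm_num
  rw [h, Finset.sum_comm, trace, map_sum]
  refine Finset.sum_congr rfl fun j _ => ?_
  simp only [diag_apply, mul_apply, conjTranspose_apply, map_sum, RCLike.star_def, RCLike.conj_mul]
  norm_cast

theorem frobenius_norm_unitary_mul [DecidableEq m] {U : Matrix m m 𝕜}
    (hU : U ∈ unitaryGroup m 𝕜) (M : Matrix m n 𝕜) : ‖U * M‖ = ‖M‖ := by
  have hUM : (U * M)ᴴ * (U * M) = Mᴴ * M := by
    have hUU : Uᴴ * U = 1 := hU.1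
    rw [conjTranspose_mul, Matrix.mul_assoc, ← Matrix.mul_assoc Uᴴ, hUU, Matrix.one_mul]
  rw [← sq_eq_sq₀ (norm_nonneg _) (norm_nonneg _), frobenius_norm_sq_eq_re_trace,
    frobenius_norm_sq_eq_re_trace, hUM]

theorem frobenius_norm_mul_unitary [DecidableEq n] {U : Matrix n n 𝕜}
    (hU : U ∈ unitaryGroup n 𝕜) (M : Matrix m n 𝕜) : ‖M * U‖ = ‖M‖ := by
  have hU' : Uᴴ ∈ unitaryGroup n 𝕜 := Unitary.star_mem hU
  rw [← frobenius_norm_conjTranspose, conjTranspose_mul, frobenius_norm_unitary_mul hU',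
    frobenius_norm_conjTranspose]

theorem frobenius_norm_sq_diagonal [DecidableEq n] (v : n → 𝕜) :
    ‖diagonal v‖ ^ 2 = ∑ i, ‖v i‖ ^ 2 := by
  rw [frobenius_norm_diagonal, EuclideanSpace.norm_sq_eq]

theorem frobenius_norm_unitary_conj [DecidableEq n] {U : Matrix n n 𝕜}
    (hU : U ∈ unitaryGroup n 𝕜) (M : Matrix n n 𝕜) : ‖U * M * Uᴴ‖ = ‖M‖ := by
  have hU' : Uᴴ ∈ unitaryGroup n 𝕜 := Unitary.star_mem hU
  rw [frobenius_norm_mul_unitary hU', frobenius_norm_unitary_mul hU]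

theorem pow_one_sub_mul_smul_unitary_conj_diagonal {α : Type*} [CommRing α] [StarRing α]
    [DecidableEq n] {U : Matrix n n α} (hU : U ∈ unitaryGroup n α) (d : n → α) (c : α) (k : ℕ) :
    (1 - U * diagonal d * Uᴴ * (c • (U * diagonal d * Uᴴ))) ^ k
      = U * diagonal (fun i => (1 - c * d i ^ 2) ^ k) * Uᴴ := by
  let φ := Unitary.conjStarAlgAut α (Matrix n n α) ⟨U, hU⟩
  have hφ (M : Matrix n n α) : U * M * Uᴴ = φ M := rfl
  have hdiag : 1 - diagonal d * (c • diagonal d) = diagonal fun i => 1 - c * d i ^ 2 := by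
    rw [mul_smul_comm, diagonal_mul_diagonal, ← diagonal_smul, ← diagonal_one, diagonal_sub]
    congr 1 with i
    simp only [Pi.smul_apply, smul_eq_mul]
    ring
  rw [hφ, ← map_smul, ← map_mul, ← map_one φ, ← map_sub, ← map_pow, hdiag, diagonal_pow]
  rfl

end Matrix

theorem one_sub_mul_hotelling_bodewig_step {R : Type*} [Ring R] (A X : R) :
    1 - A * (2 • X - X * A * X) = (1 - A * X) ^ 2 := by
  noncomm_ring

theorem hotelling_bodewig_residual_eq_pow {R : Type*} [Ring R] (A : R) (X : ℕ → R)
    (hX : ∀ t : ℕ, X (t + 1) = 2 • X t - X t * A * X t) (t : ℕ) :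
    1 - A * X t = (1 - A * X 0) ^ 2 ^ t := by
  induction t with
  | zero => rw [pow_zero, pow_one]
  | succ t ih => rw [hX, one_sub_mul_hotelling_bodewig_step, ih, ← pow_mul, ← pow_succ]

/-- For a Hermitian `A = U diag(λ) Uᴴ` and Hotelling–Bodewig iterates started from
`X₀ = ωA`, the squared Frobenius norm of the residual is
`‖I - A·X_t‖_F² = Σₙ (1 - ωλₙ²)^(2^(t+1))`. -/
theorem hotelling_bodewig_residual_frobenius
    (N : ℕ)
    (U : Matrix (Fin N) (Fin N) ℂ) (hU : U ∈ Matrix.unitaryGroup (Fin N) ℂ)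
    (lam : Fin N → ℝ) (ω : ℝ)
    (A : Matrix (Fin N) (Fin N) ℂ)
    (hA : A = U * Matrix.diagonal (fun n => (lam n : ℂ)) * Uᴴ)
    (X : ℕ → Matrix (Fin N) (Fin N) ℂ)
    (hX0 : X 0 = (ω : ℂ) • A)
    (hX : ∀ t : ℕ, X (t + 1) = 2 • X t - X t * A * X t) :
    ∀ t : ℕ, ‖(1 : Matrix (Fin N) (Fin N) ℂ) - A * X t‖ ^ 2
      = ∑ n : Fin N, (1 - ω * lam n ^ 2) ^ (2 ^ (t + 1)) := by
  intro t
  rw [hotelling_bodewig_residual_eq_pow A X hX t, hX0, hA,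
    pow_one_sub_mul_smul_unitary_conj_diagonal hU, frobenius_norm_unitary_conj hU,
    frobenius_norm_sq_diagonal]
  refine Finset.sum_congr rfl fun n _ => ?_
  have hreal : (1 - (ω : ℂ) * (lam n : ℂ) ^ 2) = ((1 - ω * lam n ^ 2 : ℝ) : ℂ) := by
    push_cast; ring
  rw [hreal, ← Complex.ofReal_pow, Complex.norm_real, Real.norm_eq_abs, sq_abs, ← pow_mul,
    ← pow_succ]
end

section
/- (Theorem 2.) Let λ > λ' > 0 and ξ > 0 be real numbers. Define L₁ = λ² + λ'² − 2λξ − 2λ'ξ + 4ξ² and L₂ = λ²λ'² − 2λ²λ'ξ − 2λλ'²ξ + (λ + λ')²ξ², and set σ₀ = √((L₁ + √(L₁² − 4L₂))/2) and σ₁ = √((L₁ − √(L₁² − 4L₂))/2). If ξ > 2λ(λ + λ')/(3λ + λ'), then σ₀ > λ and σ₁ > λ'. -/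
/-- Theorem 2: with `λ > λ' > 0` and `ξ > 2λ(λ + λ')/(3λ + λ')`, the singular values
`σ₀ ≥ σ₁` of `Ψ = [[λ - ξ, -ξ], [-ξ, λ' - ξ]]` (expressed via `L₁ = trace(ΨᵀΨ)` and
`L₂ = det(ΨᵀΨ)`) satisfy `σ₀ > λ` and `σ₁ > λ'`. -/
theorem theorem2_singular_values_increase
    (lam lam' ξ : ℝ) (h1 : lam' < lam) (h2 : 0 < lam') (h3 : 0 < ξ)
    (L1 L2 σ0 σ1 : ℝ)
    (hL1 : L1 = lam ^ 2 + lam' ^ 2 - 2 * lam * ξ - 2 * lam' * ξ + 4 * ξ ^ 2)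
    (hL2 : L2 = lam ^ 2 * lam' ^ 2 - 2 * lam ^ 2 * lam' * ξ - 2 * lam * lam' ^ 2 * ξ
        + (lam + lam') ^ 2 * ξ ^ 2)
    (hσ0 : σ0 = Real.sqrt ((L1 + Real.sqrt (L1 ^ 2 - 4 * L2)) / 2))
    (hσ1 : σ1 = Real.sqrt ((L1 - Real.sqrt (L1 ^ 2 - 4 * L2)) / 2))
    (hξ : 2 * lam * (lam + lam') / (3 * lam + lam') < ξ) :
    lam < σ0 ∧ lam' < σ1 := by
  have hden : 0 < 3 * lam + lam' := by linarith
  have hxi : 2 * lam * (lam + lam') < ξ * (3 * lam + lam') := by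
    rw [div_lt_iff₀ hden] at hξ; linarith
  -- p(λ²) < 0
  have hp0 : lam ^ 4 - lam ^ 2 * L1 + L2 < 0 := by
    have : lam ^ 4 - lam ^ 2 * L1 + L2
        = (lam - lam') * ξ * (2 * lam * (lam + lam') - ξ * (3 * lam + lam')) := by
      rw [hL1, hL2]; ring
    rw [this]
    apply mul_neg_of_pos_of_neg
    · apply mul_pos (by linarith) h3
    · linarith
  -- p(λ'²) > 0
  have hp1 : 0 < lam' ^ 4 - lam' ^ 2 * L1 + L2 := by
    have : lam' ^ 4 - lam' ^ 2 * L1 + L2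
        = (lam - lam') * ξ * (ξ * (lam + 3 * lam') - 2 * lam' * (lam + lam')) := by
      rw [hL1, hL2]; ring
    rw [this]
    apply mul_pos
    · apply mul_pos (by linarith) h3
    · nlinarith
  have hD : 0 ≤ L1 ^ 2 - 4 * L2 := by
    have : L1 ^ 2 - 4 * L2 = ((lam - lam') ^ 2 + 4 * ξ ^ 2) * (lam + lam' - 2 * ξ) ^ 2 := by
      rw [hL1, hL2]; ring
    rw [this]; positivity
  set D := L1 ^ 2 - 4 * L2 with hDdef
  clear_value D
  have hsq : Real.sqrt D ^ 2 = D := Real.sq_sqrt hD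
  have hnn : 0 ≤ Real.sqrt D := Real.sqrt_nonneg D
  -- 2λ² - L1 < √D
  have h0 : 2 * lam ^ 2 - L1 < Real.sqrt D := by
    nlinarith [hsq, hnn, hp0]
  -- √D < L1 - 2λ'²
  have hA : (2 * lam ^ 2 - L1) ^ 2 < D := by nlinarith [hp0]
  have hB : D < (L1 - 2 * lam' ^ 2) ^ 2 := by nlinarith [hp1]
  have hpos : 0 < L1 - 2 * lam' ^ 2 := by
    by_contra h
    push_neg at h
    have hu : 0 ≤ 2 * lam' ^ 2 - L1 := by linarith
    have hll : (0:ℝ) ≤ lam ^ 2 - lam' ^ 2 := by nlinarith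
    nlinarith [hA, hB, mul_nonneg hll hu, sq_nonneg (lam ^ 2 - lam' ^ 2)]
  have h1' : Real.sqrt D < L1 - 2 * lam' ^ 2 := by
    rw [show Real.sqrt D < L1 - 2 * lam' ^ 2 ↔ D < (L1 - 2 * lam' ^ 2) ^ 2 from
      Real.sqrt_lt' hpos]
    exact hB
  constructor
  · rw [hσ0]
    rw [show lam < Real.sqrt ((L1 + Real.sqrt D) / 2) ↔ lam ^ 2 < (L1 + Real.sqrt D) / 2 from
      Real.lt_sqrt (by linarith)]
    linarith
  · rw [hσ1]
    rw [show lam' < Real.sqrt ((L1 - Real.sqrt D) / 2) ↔ lam' ^ 2 < (L1 - Real.sqrt D) / 2 from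
      Real.lt_sqrt h2.le]
    linarith
end

section
/- Let λ > λ' > 0 and ξ > 0 be real numbers, and define L₁ = λ² + λ'² − 2λξ − 2λ'ξ + 4ξ² and L₂ = λ²λ'² − 2λ²λ'ξ − 2λλ'²ξ + (λ + λ')²ξ². If ξ > 2λ(λ + λ')/(3λ + λ'), then λ⁴ < L₁λ² − L₂. -/
/-- Key step of Appendix B for `σ₀ > λ`: if `ξ > 2λ(λ + λ')/(3λ + λ')`, then
`λ⁴ < L₁λ² - L₂`. -/
theorem appendixB_key_step_sigma0
    (lam lam' ξ : ℝ) (h1 : lam' < lam) (h2 : 0 < lam') (h3 : 0 < ξ)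
    (L1 L2 : ℝ)
    (hL1 : L1 = lam ^ 2 + lam' ^ 2 - 2 * lam * ξ - 2 * lam' * ξ + 4 * ξ ^ 2)
    (hL2 : L2 = lam ^ 2 * lam' ^ 2 - 2 * lam ^ 2 * lam' * ξ - 2 * lam * lam' ^ 2 * ξ
        + (lam + lam') ^ 2 * ξ ^ 2)
    (hξ : 2 * lam * (lam + lam') / (3 * lam + lam') < ξ) :
    lam ^ 4 < L1 * lam ^ 2 - L2 := by
  have hden : 0 < 3 * lam + lam' := by linarith
  have hξ' : 2 * lam * (lam + lam') < ξ * (3 * lam + lam') := by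
    rwa [div_lt_iff₀ hden] at hξ
  subst hL1 hL2
  nlinarith [mul_pos h3 (sub_pos.mpr h1), sub_pos.mpr hξ']
end
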